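/- For $0 < H < 1/2$ and $T > 0$, if $f \in L^2([0,T])$, then $\int_0^T t^{1-2H}\left(\int_t^T (u-t)^{-1/2-H} u^{H-1/2} f(u)\,du\right)^2 dt \le C \int_0^T f(t)^2\,dt$ for a constant $C$ depending only on $H$ and $T$; i.e., the right-sided weighted fractional operator $K_T^{H,*}$ is bounded on $L^2([0,T])$. -/

import Mathlib

open MeasureTheory Set
open scoped ENNReal

/-! Since `u ^ (H - 1/2) ≤ t ^ (H - 1/2)` for `u ≥ t`, the weight `t ^ (1 - 2H)` is absorbed and
it suffices to bound `∫_0^T (∫_t^T (u - t) ^ p |f u| du)² dt` with `p = -1/2 - H > -1`.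
Cauchy–Schwarz against the kernel `(u - t) ^ p`, whose mass over any subinterval of `[0, T]` is at
most `A = T ^ (p + 1) / (p + 1)`, followed by Tonelli over the triangle `0 < t < u ≤ T` and a second
use of the same mass bound, gives the constant `A ^ 2`. -/

section RpowKernel

variable {p a b : ℝ}

lemma lintegral_sub_rpow_Ioc (hp : -1 < p) (hab : a ≤ b) :
    ∫⁻ u in Ioc a b, ENNReal.ofReal ((u - a) ^ p)
      = ENNReal.ofReal ((b - a) ^ (p + 1) / (p + 1)) := by
  have hint := (intervalIntegral.intervalIntegrable_rpow' (a := 0) (b := b - a) hp).comp_sub_right a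
  rw [zero_add, sub_add_cancel, intervalIntegrable_iff_integrableOn_Ioc_of_le hab] at hint
  rw [← ofReal_integral_eq_lintegral_ofReal hint (ae_restrict_of_forall_mem measurableSet_Ioc
      fun u hu => Real.rpow_nonneg (sub_nonneg.2 hu.1.le) p), ← intervalIntegral.integral_of_le hab,
    intervalIntegral.integral_comp_sub_right (· ^ p), sub_self, integral_rpow (Or.inl hp),
    Real.zero_rpow (by linarith), sub_zero]

lemma lintegral_rpow_sub_Ioo (hp : -1 < p) (hab : a ≤ b) :
    ∫⁻ t in Ioo a b, ENNReal.ofReal ((b - t) ^ p)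
      = ENNReal.ofReal ((b - a) ^ (p + 1) / (p + 1)) := by
  have hint := (intervalIntegral.intervalIntegrable_rpow' (a := 0) (b := b - a) hp).comp_sub_left b
  rw [sub_zero, sub_sub_cancel, IntervalIntegrable.symm_iff,
    intervalIntegrable_iff_integrableOn_Ioc_of_le hab] at hint
  rw [Measure.restrict_congr_set Ioo_ae_eq_Ioc,
    ← ofReal_integral_eq_lintegral_ofReal hint (ae_restrict_of_forall_mem measurableSet_Ioc
      fun t ht => Real.rpow_nonneg (sub_nonneg.2 ht.2) p), ← intervalIntegral.integral_of_le hab,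
    intervalIntegral.integral_comp_sub_left (· ^ p), sub_self, integral_rpow (Or.inl hp),
    Real.zero_rpow (by linarith), sub_zero]

end RpowKernel

lemma sq_lintegral_mul_le {α : Type*} [MeasurableSpace α] {μ : Measure α} {K F : α → ℝ≥0∞}
    (hK : AEMeasurable K μ) (hF : AEMeasurable F μ) :
    (∫⁻ x, K x * F x ∂μ) ^ 2 ≤ (∫⁻ x, K x ∂μ) * ∫⁻ x, K x * F x ^ 2 ∂μ := by
  have hsqrt : ∀ x : ℝ≥0∞, x ^ (2⁻¹ : ℝ) * x ^ (2⁻¹ : ℝ) = x := fun x => by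
    rw [← ENNReal.rpow_add_of_nonneg _ _ (by norm_num) (by norm_num)]; norm_num
  have hsq : ∀ x : ℝ≥0∞, x ^ (2 : ℝ) = x ^ 2 := fun x => ENNReal.rpow_ofNat x 2
  have hroot : ∀ x : ℝ≥0∞, (x ^ (1 / 2 : ℝ)) ^ 2 = x := fun x => by
    rw [← hsq, ← ENNReal.rpow_mul]; norm_num
  have holder := ENNReal.lintegral_mul_le_Lp_mul_Lq μ Real.HolderConjugate.two_two
    (hK.pow_const (2⁻¹ : ℝ)) ((hK.pow_const (2⁻¹ : ℝ)).mul hF)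
  calc (∫⁻ x, K x * F x ∂μ) ^ 2
      = (∫⁻ x, K x ^ (2⁻¹ : ℝ) * (K x ^ (2⁻¹ : ℝ) * F x) ∂μ) ^ 2 := by
        simp only [← mul_assoc, hsqrt]
    _ ≤ ((∫⁻ x, (K x ^ (2⁻¹ : ℝ)) ^ (2 : ℝ) ∂μ) ^ (1 / 2 : ℝ) *
          (∫⁻ x, (K x ^ (2⁻¹ : ℝ) * F x) ^ (2 : ℝ) ∂μ) ^ (1 / 2 : ℝ)) ^ 2 := by
        gcongr; exact holder
    _ = (∫⁻ x, K x ∂μ) * ∫⁻ x, K x * F x ^ 2 ∂μ := by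
        rw [mul_pow, hroot, hroot]
        congr 1 <;> refine lintegral_congr fun x => ?_
        · rw [hsq, pow_two, hsqrt]
        · rw [hsq, mul_pow, pow_two (K x ^ _), hsqrt]

lemma lintegral_Ioc_lintegral_Ioc_swap {a b : ℝ} {G : ℝ → ℝ → ℝ≥0∞}
    (hG : AEMeasurable (Function.uncurry G)
      ((volume.restrict (Ioc a b)).prod (volume.restrict (Ioc a b)))) :
    ∫⁻ t in Ioc a b, ∫⁻ u in Ioc t b, G t u = ∫⁻ u in Ioc a b, ∫⁻ t in Ioo a u, G t u := by
  set S : Set (ℝ × ℝ) := {z | z.1 < z.2}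
  have hS : MeasurableSet S := measurableSet_lt measurable_fst measurable_snd
  have t_slice : ∀ t ∈ Ioc a b,
      ∫⁻ u in Ioc t b, G t u = ∫⁻ u in Ioc a b, S.indicator (Function.uncurry G) (t, u) := by
    intro t ht
    rw [← lintegral_indicator measurableSet_Ioc, ← lintegral_indicator measurableSet_Ioc]
    refine lintegral_congr fun u => ?_
    simp only [indicator_apply, mem_Ioc, S, Function.uncurry_apply_pair]
    grind
  have u_slice : ∀ u ∈ Ioc a b,
      ∫⁻ t in Ioo a u, G t u = ∫⁻ t in Ioc a b, S.indicator (Function.uncurry G) (t, u) := by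
    intro u hu
    rw [← lintegral_indicator measurableSet_Ioo, ← lintegral_indicator measurableSet_Ioc]
    refine lintegral_congr fun t => ?_
    simp only [indicator_apply, mem_Ioc, mem_Ioo, S, Function.uncurry_apply_pair]
    grind
  rw [setLIntegral_congr_fun measurableSet_Ioc t_slice,
    setLIntegral_congr_fun measurableSet_Ioc u_slice]
  exact lintegral_lintegral_swap (hG.indicator hS)

lemma ofReal_rpow_neg_mul_enorm_setIntegral_le {t b q β : ℝ} (ht : 0 < t) (hβ : β ≤ 0)
    (f : ℝ → ℝ) :
    ENNReal.ofReal (t ^ (-β)) * ‖∫ u in Ioc t b, (u - t) ^ q * u ^ β * f u‖ₑ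
      ≤ ∫⁻ u in Ioc t b, ENNReal.ofReal ((u - t) ^ q) * ‖f u‖ₑ := by
  have weight_le : ∀ u ∈ Ioc t b, ‖(u - t) ^ q * u ^ β * f u‖ₑ
      ≤ ENNReal.ofReal (t ^ β) * (ENNReal.ofReal ((u - t) ^ q) * ‖f u‖ₑ) := by
    intro u hu
    have hu0 : 0 < u := ht.trans hu.1
    rw [enorm_mul, enorm_mul, Real.enorm_of_nonneg (Real.rpow_nonneg (sub_nonneg.2 hu.1.le) q),
      Real.enorm_of_nonneg (Real.rpow_nonneg hu0.le β), mul_comm (ENNReal.ofReal _), mul_assoc]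
    gcongr ENNReal.ofReal ?_ * _
    exact Real.rpow_le_rpow_of_nonpos ht hu.1.le hβ
  calc ENNReal.ofReal (t ^ (-β)) * ‖∫ u in Ioc t b, (u - t) ^ q * u ^ β * f u‖ₑ
      ≤ ENNReal.ofReal (t ^ (-β)) * ∫⁻ u in Ioc t b, ‖(u - t) ^ q * u ^ β * f u‖ₑ := by
        gcongr; exact enorm_integral_le_lintegral_enorm _
    _ ≤ ENNReal.ofReal (t ^ (-β)) *
          ∫⁻ u in Ioc t b, ENNReal.ofReal (t ^ β) * (ENNReal.ofReal ((u - t) ^ q) * ‖f u‖ₑ) := by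
        gcongr _ * ?_
        exact setLIntegral_mono' measurableSet_Ioc weight_le
    _ = ∫⁻ u in Ioc t b, ENNReal.ofReal ((u - t) ^ q) * ‖f u‖ₑ := by
        rw [lintegral_const_mul' _ _ ENNReal.ofReal_ne_top, ← mul_assoc,
          ← ENNReal.ofReal_mul (Real.rpow_nonneg ht.le _), ← Real.rpow_add ht, neg_add_cancel,
          Real.rpow_zero, ENNReal.ofReal_one, one_mul]

lemma lintegral_sq_lintegral_sub_rpow_mul_le {p a b : ℝ} (hp : -1 < p) {F : ℝ → ℝ≥0∞}
    (hF : AEMeasurable F (volume.restrict (Ioc a b))) :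
    ∫⁻ t in Ioc a b, (∫⁻ u in Ioc t b, ENNReal.ofReal ((u - t) ^ p) * F u) ^ 2
      ≤ ENNReal.ofReal ((b - a) ^ (p + 1) / (p + 1)) ^ 2 * ∫⁻ u in Ioc a b, F u ^ 2 := by
  have kernel_mass_le : ∀ x y, a ≤ x → x ≤ y → y ≤ b →
      ENNReal.ofReal ((y - x) ^ (p + 1) / (p + 1))
        ≤ ENNReal.ofReal ((b - a) ^ (p + 1) / (p + 1)) := by
    intro x y hax hxy hyb
    have : 0 < p + 1 := by linarith
    gcongr
  set A := ENNReal.ofReal ((b - a) ^ (p + 1) / (p + 1))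
  have hG : AEMeasurable (Function.uncurry fun t u => ENNReal.ofReal ((u - t) ^ p) * F u ^ 2)
      ((volume.restrict (Ioc a b)).prod (volume.restrict (Ioc a b))) := by
    have hk : Measurable fun z : ℝ × ℝ => ENNReal.ofReal ((z.2 - z.1) ^ p) := by fun_prop
    exact hk.aemeasurable.mul (hF.pow_const 2).comp_snd
  calc ∫⁻ t in Ioc a b, (∫⁻ u in Ioc t b, ENNReal.ofReal ((u - t) ^ p) * F u) ^ 2
      ≤ ∫⁻ t in Ioc a b, A * ∫⁻ u in Ioc t b, ENNReal.ofReal ((u - t) ^ p) * F u ^ 2 := by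
        refine setLIntegral_mono' measurableSet_Ioc fun t ht => ?_
        have hFt : AEMeasurable F (volume.restrict (Ioc t b)) :=
          hF.mono_measure (Measure.restrict_mono (Ioc_subset_Ioc_left ht.1.le) le_rfl)
        refine (sq_lintegral_mul_le (by fun_prop) hFt).trans ?_
        rw [lintegral_sub_rpow_Ioc hp ht.2]
        gcongr
        exact kernel_mass_le t b ht.1.le ht.2 le_rfl
    _ = A * ∫⁻ u in Ioc a b, (∫⁻ t in Ioo a u, ENNReal.ofReal ((u - t) ^ p)) * F u ^ 2 := by
        rw [lintegral_const_mul' _ _ ENNReal.ofReal_ne_top,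
          lintegral_Ioc_lintegral_Ioc_swap hG]
        congr 1
        exact lintegral_congr fun u => lintegral_mul_const _ (by fun_prop)
    _ ≤ A * ∫⁻ u in Ioc a b, A * F u ^ 2 := by
        gcongr _ * ?_
        refine setLIntegral_mono' measurableSet_Ioc fun u hu => ?_
        rw [lintegral_rpow_sub_Ioo hp hu.1.le]
        gcongr
        exact kernel_mass_le a u le_rfl hu.1.le hu.2
    _ = A ^ 2 * ∫⁻ u in Ioc a b, F u ^ 2 := by
        rw [lintegral_const_mul' _ _ ENNReal.ofReal_ne_top, ← mul_assoc, sq]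

theorem stmt_1_general (H T : ℝ) (hH : H < 1/2) (hT : 0 < T) :
    ∃ C : ℝ, ∀ f : ℝ → ℝ,
      IntegrableOn (fun t => (f t) ^ 2) (Ioc 0 T) volume →
      (∫ t in Ioc (0:ℝ) T, t ^ (1 - 2*H) *
          (∫ u in Ioc t T, (u - t) ^ (-(1/2) - H) * u ^ (H - 1/2) * f u) ^ 2)
        ≤ C * ∫ t in Ioc (0:ℝ) T, (f t) ^ 2 := by
  set p : ℝ := -(1/2) - H with hp_def
  have hp : -1 < p := by rw [hp_def]; linarith
  set A : ℝ := T ^ (p + 1) / (p + 1)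
  have hA : 0 ≤ A := div_nonneg (Real.rpow_nonneg hT.le _) (by linarith)
  refine ⟨A ^ 2, fun f hf => ?_⟩
  -- `f` itself need not be a.e.-measurable, but `‖f‖ₑ = ofReal √(f ^ 2)` is.
  have hF : AEMeasurable (fun u => ‖f u‖ₑ) (volume.restrict (Ioc 0 T)) := by
    simpa only [Real.sqrt_sq_eq_abs, ← Real.enorm_eq_ofReal_abs] using
      hf.aestronglyMeasurable.aemeasurable.sqrt.ennreal_ofReal
  have hL2 : ∫⁻ u in Ioc 0 T, ‖f u‖ₑ ^ 2 = ENNReal.ofReal (∫ t in Ioc 0 T, f t ^ 2) := by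
    rw [ofReal_integral_eq_lintegral_ofReal hf (ae_of_all _ fun t => sq_nonneg (f t))]
    simp only [Real.enorm_eq_ofReal_abs, ← ENNReal.ofReal_pow (abs_nonneg _), sq_abs]
  have pointwise : ∀ t ∈ Ioc (0:ℝ) T,
      ‖t ^ (1 - 2*H) * (∫ u in Ioc t T, (u - t) ^ p * u ^ (H - 1/2) * f u) ^ 2‖ₑ
        ≤ (∫⁻ u in Ioc t T, ENNReal.ofReal ((u - t) ^ p) * ‖f u‖ₑ) ^ 2 := by
    intro t ht
    have hweight : t ^ (1 - 2*H) = (t ^ (-(H - 1/2))) ^ 2 := by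
      rw [← Real.rpow_mul_natCast ht.1.le]; ring_nf
    rw [enorm_mul, enorm_pow, hweight, enorm_pow,
      Real.enorm_of_nonneg (Real.rpow_nonneg ht.1.le _), ← mul_pow]
    gcongr
    exact ofReal_rpow_neg_mul_enorm_setIntegral_le ht.1 (by linarith) f
  rw [← ENNReal.ofReal_le_ofReal_iff (by positivity)]
  calc ENNReal.ofReal (∫ t in Ioc (0:ℝ) T, t ^ (1 - 2*H) *
          (∫ u in Ioc t T, (u - t) ^ p * u ^ (H - 1/2) * f u) ^ 2)
      ≤ ∫⁻ t in Ioc (0:ℝ) T, ‖t ^ (1 - 2*H) *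
          (∫ u in Ioc t T, (u - t) ^ p * u ^ (H - 1/2) * f u) ^ 2‖ₑ :=
        (Real.ofReal_le_enorm _).trans (enorm_integral_le_lintegral_enorm _)
    _ ≤ ∫⁻ t in Ioc (0:ℝ) T, (∫⁻ u in Ioc t T, ENNReal.ofReal ((u - t) ^ p) * ‖f u‖ₑ) ^ 2 :=
        setLIntegral_mono' measurableSet_Ioc pointwise
    _ ≤ ENNReal.ofReal A ^ 2 * ∫⁻ u in Ioc 0 T, ‖f u‖ₑ ^ 2 :=
        (lintegral_sq_lintegral_sub_rpow_mul_le hp hF).trans_eq (by rw [sub_zero])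
    _ = ENNReal.ofReal (A ^ 2 * ∫ t in Ioc (0:ℝ) T, f t ^ 2) := by
        rw [hL2, ENNReal.ofReal_mul (sq_nonneg A), ENNReal.ofReal_pow hA]

/-- The right-sided weighted fractional operator `K_T^{H,*}` is bounded on `L²([0,T])`:
`∫_0^T t^(1-2H) (∫_t^T (u-t)^(-1/2-H) u^(H-1/2) f(u) du)² dt ≤ C ∫_0^T f(t)² dt`
for a constant `C` depending only on `H` and `T`. -/
theorem stmt_1 (H T : ℝ) (hH0 : 0 < H) (hH : H < 1/2) (hT : 0 < T) :
    ∃ C : ℝ, ∀ f : ℝ → ℝ,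
      IntegrableOn (fun t => (f t) ^ 2) (Ioc 0 T) volume →
      (∫ t in Ioc (0:ℝ) T, t ^ (1 - 2*H) *
          (∫ u in Ioc t T, (u - t) ^ (-(1/2) - H) * u ^ (H - 1/2) * f u) ^ 2)
        ≤ C * ∫ t in Ioc (0:ℝ) T, (f t) ^ 2 :=
  stmt_1_general H T hH hT
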